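/- For a basic feasible solution with basis B, if for every nonbasic index j the reduced cost z_j − c_j = C_Bᵀ B⁻¹ a_j − c_j is ≤ 0, then the basic feasible solution X = (B⁻¹b, 0) is optimal for the linear program min Cᵀ X subject to AX = b, X ≥ 0. -/

import Mathlib

/-!
The simplex multipliers `y = c_Bᵀ B⁻¹` form a dual feasible solution exactly when all reduced costs
are nonpositive: `yᵀ B = c_Bᵀ`, and `yᵀ a_j - c_j` is the reduced cost of `j`. The objective value
`c_Bᵀ B⁻¹ b` of the basic solution is the dual objective `yᵀ b`, so weak duality bounds it by the
cost of every feasible point.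
-/

open Matrix

theorem Matrix.dotProduct_mulVec_le_of_vecMul_le {ι κ R : Type*} [Fintype ι] [Fintype κ]
    [CommSemiring R] [PartialOrder R] [IsOrderedRing R] {A : Matrix ι κ R} {y : ι → R} {c x : κ → R}
    (hy : y ᵥ* A ≤ c) (hx : 0 ≤ x) : y ⬝ᵥ A *ᵥ x ≤ c ⬝ᵥ x := by
  rw [dotProduct_mulVec]
  exact dotProduct_le_dotProduct_of_nonneg_right hy hx

theorem Matrix.vecMul_nonsing_inv_vecMul_fromCols_le {ι κ R : Type*} [Fintype ι] [DecidableEq ι]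
    [CommRing R] [PartialOrder R] [IsOrderedRing R] {B : Matrix ι ι R} (hB : IsUnit B.det)
    {N : Matrix ι κ R} {cB : ι → R} {cN : κ → R}
    (hred : ∀ j, cB ⬝ᵥ B⁻¹ *ᵥ (fun i => N i j) - cN j ≤ 0) :
    (cB ᵥ* B⁻¹) ᵥ* fromCols B N ≤ Sum.elim cB cN := by
  rw [vecMul_fromCols, vecMul_vecMul, nonsing_inv_mul _ hB, vecMul_one, Sum.elim_le_elim_iff]
  refine ⟨le_rfl, fun j => ?_⟩
  have hj := hred j
  rw [dotProduct_mulVec, sub_nonpos] at hj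
  exact hj

theorem nonpositive_reduced_costs_optimal_general (m n : ℕ)
    (B : Matrix (Fin m) (Fin m) ℝ) (N : Matrix (Fin m) (Fin n) ℝ)
    (b : Fin m → ℝ) (cB : Fin m → ℝ) (cN : Fin n → ℝ)
    (hB : IsUnit B.det)
    (hred : ∀ j : Fin n, cB ⬝ᵥ B⁻¹.mulVec (fun i => N i j) - cN j ≤ 0) :
    ∀ X : Fin m ⊕ Fin n → ℝ,
      (Matrix.fromCols B N).mulVec X = b → 0 ≤ X →
      Sum.elim cB cN ⬝ᵥ Sum.elim (B⁻¹.mulVec b) (0 : Fin n → ℝ) ≤ Sum.elim cB cN ⬝ᵥ X := by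
  intro X hX hXpos
  have hvalue : Sum.elim cB cN ⬝ᵥ Sum.elim (B⁻¹ *ᵥ b) 0 = (cB ᵥ* B⁻¹) ⬝ᵥ b := by
    rw [sumElim_dotProduct_sumElim, dotProduct_zero, add_zero, dotProduct_mulVec]
  rw [hvalue, ← hX]
  exact dotProduct_mulVec_le_of_vecMul_le (vecMul_nonsing_inv_vecMul_fromCols_le hB hred) hXpos

/-- If all reduced costs of nonbasic variables are ≤ 0, the basic feasible solution is optimal. -/
theorem nonpositive_reduced_costs_optimal (m n : ℕ)
    (B : Matrix (Fin m) (Fin m) ℝ) (N : Matrix (Fin m) (Fin n) ℝ)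
    (b : Fin m → ℝ) (cB : Fin m → ℝ) (cN : Fin n → ℝ)
    (hB : IsUnit B.det)
    (hfeas : 0 ≤ B⁻¹.mulVec b)
    (hred : ∀ j : Fin n, cB ⬝ᵥ B⁻¹.mulVec (fun i => N i j) - cN j ≤ 0) :
    ∀ X : Fin m ⊕ Fin n → ℝ,
      (Matrix.fromCols B N).mulVec X = b → 0 ≤ X →
      Sum.elim cB cN ⬝ᵥ Sum.elim (B⁻¹.mulVec b) (0 : Fin n → ℝ) ≤ Sum.elim cB cN ⬝ᵥ X :=
  nonpositive_reduced_costs_optimal_general m n B N b cB cN hB hred
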